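/- arXiv:1503.02722 — 6 statements merged into one kernel-verified Lean document; each statement's English description precedes it below -/
import Mathlib

section
/- Let x, y be unit vectors in R^n with ⟨x,y⟩ ≠ 0, let u_1,...,u_k be an orthonormal set, and let P be the orthogonal projection onto span{u_1,...,u_k}. Assume {x,u_1,...,u_k} is linearly independent. Then the least-squares coefficient of x in the regression of y onto {x,u_1,...,u_k} has sign different from the sign of ⟨x,y⟩ if and only if ⟨Px,Py⟩/⟨x,y⟩ > 1. -/
/-!
Write `P` for the projection onto `span u` and `z = x - P x`. The residual of the least-squares
fit is orthogonal to the whole span of `x, u₁, …, u_k`, in particular to `z`; since `z ⊥ u`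
this gives the Frisch–Waugh–Lovell identity `β₀ ‖z‖² = ⟪z, y⟫ = ⟪x, y⟫ - ⟪P x, P y⟫`.
Linear independence makes `‖z‖² > 0`, so `β₀ ⟪x, y⟫ < 0` exactly when `⟪P x, P y⟫ / ⟪x, y⟫ > 1`.
-/

open RealInnerProductSpace

section InnerProductSpace

variable {E : Type*} [NormedAddCommGroup E] [InnerProductSpace ℝ E]

theorem Submodule.real_inner_sub_eq_zero_of_forall_norm_sub_le (K : Submodule ℝ E) {u v : E}
    (hv : v ∈ K) (hmin : ∀ w ∈ K, ‖u - v‖ ≤ ‖u - w‖) {w : E} (hw : w ∈ K) :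
    ⟪u - v, w⟫ = 0 := by
  refine (norm_eq_iInf_iff_real_inner_eq_zero K hv).1 (le_antisymm ?_ ?_) w hw
  · exact le_ciInf fun w' => hmin w' w'.2
  · refine ciInf_le ?_ (⟨v, hv⟩ : (K : Set E))
    exact ⟨0, Set.forall_mem_range.2 fun _ => norm_nonneg _⟩

theorem Submodule.mem_span_range_finCons_iff {k : ℕ} {x w : E} {u : Fin k → E} :
    w ∈ span ℝ (Set.range (Fin.cons x u : Fin (k + 1) → E)) ↔
      ∃ γ : Fin (k + 1) → ℝ, γ 0 • x + ∑ i, γ i.succ • u i = w := by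
  simp_rw [mem_span_range_iff_exists_fun, Fin.sum_univ_succ, Fin.cons_zero, Fin.cons_succ]

namespace Orthonormal

variable {ι : Type*} [Fintype ι] {u : ι → E}

theorem inner_sub_sum_inner_smul_self (hu : Orthonormal ℝ u) (x : E) (j : ι) :
    ⟪x - ∑ i, ⟪x, u i⟫ • u i, u j⟫ = 0 := by
  rw [inner_sub_left, hu.inner_left_fintype]
  simp

theorem inner_sub_sum_inner_smul_sum (hu : Orthonormal ℝ u) (x : E) (c : ι → ℝ) :
    ⟪x - ∑ i, ⟪x, u i⟫ • u i, ∑ i, c i • u i⟫ = 0 := by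
  simp [inner_sum, real_inner_smul_right, hu.inner_sub_sum_inner_smul_self]

theorem inner_sub_sum_inner_smul_left (hu : Orthonormal ℝ u) (x y : E) :
    ⟪x - ∑ i, ⟪x, u i⟫ • u i, y⟫ =
      ⟪x, y⟫ - ⟪∑ i, ⟪x, u i⟫ • u i, ∑ i, ⟪y, u i⟫ • u i⟫ := by
  have h := hu.inner_sub_sum_inner_smul_sum y fun i => ⟪x, u i⟫
  rw [real_inner_comm, inner_sub_right, sub_eq_zero] at h
  rw [inner_sub_left, h]

theorem inner_sub_sum_inner_smul_self_left (hu : Orthonormal ℝ u) (x : E) :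
    ⟪x - ∑ i, ⟪x, u i⟫ • u i, x⟫ = ‖x - ∑ i, ⟪x, u i⟫ • u i‖ ^ 2 := by
  rw [← real_inner_self_eq_norm_sq, inner_sub_right _ x, hu.inner_sub_sum_inner_smul_sum,
    sub_zero]

theorem frisch_waugh_lovell (hu : Orthonormal ℝ u) {x y : E} {b : ℝ} {c : ι → ℝ}
    (horth : ⟪y - (b • x + ∑ i, c i • u i), x - ∑ i, ⟪x, u i⟫ • u i⟫ = 0) :
    b * ‖x - ∑ i, ⟪x, u i⟫ • u i‖ ^ 2 =
      ⟪x, y⟫ - ⟪∑ i, ⟪x, u i⟫ • u i, ∑ i, ⟪y, u i⟫ • u i⟫ := by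
  rw [real_inner_comm, inner_sub_right, inner_add_right, real_inner_smul_right,
    hu.inner_sub_sum_inner_smul_sum, add_zero, sub_eq_zero,
    hu.inner_sub_sum_inner_smul_left, hu.inner_sub_sum_inner_smul_self_left] at horth
  exact horth.symm

end Orthonormal

end InnerProductSpace

theorem mul_neg_iff_one_lt_div_of_mul_eq_sub {b c d s : ℝ} (hd : 0 < d) (hc : c ≠ 0)
    (h : b * d = c - s) : b * c < 0 ↔ 1 < s / c := by
  have hs : s / c - 1 = -(b * c) * d / c ^ 2 := by
    field_simp
    linear_combination h
  rw [← sub_pos (a := s / c), hs, div_pos_iff_of_pos_right (by positivity),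
    mul_pos_iff_of_pos_right hd, neg_pos]

theorem stmt1_general (n k : ℕ) (x y : EuclideanSpace ℝ (Fin n))
    (hxy : ⟪x, y⟫ ≠ 0)
    (u : Fin k → EuclideanSpace ℝ (Fin n)) (hu : Orthonormal ℝ u)
    (hli : LinearIndependent ℝ (Fin.cons x u : Fin (k + 1) → EuclideanSpace ℝ (Fin n)))
    (β : Fin (k + 1) → ℝ)
    (hmin : ∀ (γ : Fin (k + 1) → ℝ),
      ‖y - (β 0 • x + ∑ i, β i.succ • u i)‖ ≤ ‖y - (γ 0 • x + ∑ i, γ i.succ • u i)‖) :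
    β 0 * ⟪x, y⟫ < 0 ↔
      ⟪∑ i, ⟪x, u i⟫ • u i, ∑ i, ⟪y, u i⟫ • u i⟫ / ⟪x, y⟫ > 1 := by
  set K := Submodule.span ℝ (Set.range (Fin.cons x u : Fin (k + 1) → EuclideanSpace ℝ (Fin n)))
  set z := x - ∑ i, ⟪x, u i⟫ • u i
  have hz : z ≠ 0 := by
    rw [sub_ne_zero]
    rintro hxP
    refine (linearIndependent_finCons.1 hli).2 (hxP ▸ Submodule.sum_smul_mem _ _ fun i _ => ?_)
    exact Submodule.subset_span (Set.mem_range_self i)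
  have hzK : z ∈ K := Submodule.mem_span_range_finCons_iff.2
    ⟨Fin.cons 1 fun i => -⟪x, u i⟫, by simp [z, sub_eq_add_neg]⟩
  have hfit : β 0 • x + ∑ i, β i.succ • u i ∈ K :=
    Submodule.mem_span_range_finCons_iff.2 ⟨β, rfl⟩
  have hres := K.real_inner_sub_eq_zero_of_forall_norm_sub_le hfit (fun w hw => by
    obtain ⟨γ, rfl⟩ := Submodule.mem_span_range_finCons_iff.1 hw
    exact hmin γ) hzK
  exact mul_neg_iff_one_lt_div_of_mul_eq_sub (by positivity) hxy (hu.frisch_waugh_lovell hres)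

/-- For unit vectors `x, y` with `⟪x,y⟫ ≠ 0`, an orthonormal family `u`,
`P` the orthogonal projection onto `span{u₁,…,u_k}` (so `P z = ∑ i, ⟪z, u i⟫ • u i`),
and `{x, u₁, …, u_k}` linearly independent, the least-squares coefficient of `x` in
the regression of `y` onto `{x, u₁,…,u_k}` has sign different from `⟪x,y⟫`
(i.e. their product is negative) iff `⟪Px, Py⟫ / ⟪x,y⟫ > 1`. -/
theorem stmt1 (n k : ℕ) (x y : EuclideanSpace ℝ (Fin n))
    (hx : ‖x‖ = 1) (hy : ‖y‖ = 1) (hxy : ⟪x, y⟫ ≠ 0)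
    (u : Fin k → EuclideanSpace ℝ (Fin n)) (hu : Orthonormal ℝ u)
    (hli : LinearIndependent ℝ (Fin.cons x u : Fin (k + 1) → EuclideanSpace ℝ (Fin n)))
    (β : Fin (k + 1) → ℝ)
    (hmin : ∀ (γ : Fin (k + 1) → ℝ),
      ‖y - (β 0 • x + ∑ i, β i.succ • u i)‖ ≤ ‖y - (γ 0 • x + ∑ i, γ i.succ • u i)‖) :
    β 0 * ⟪x, y⟫ < 0 ↔
      ⟪∑ i, ⟪x, u i⟫ • u i, ∑ i, ⟪y, u i⟫ • u i⟫ / ⟪x, y⟫ > 1 :=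
  stmt1_general n k x y hxy u hu hli β hmin
end

section
/- Let x, y be unit vectors in R^n with r := ⟨x,y⟩ > 0, let v = x + y, and let P be an orthogonal projection onto a subspace U of R^n. If ‖Pv‖²/‖v‖² < 2r/(1+r), then ⟨x,y⟩ − ⟨Px,Py⟩ > 0. -/
open RealInnerProductSpace

/-!
Write `P` for the projection and `v = x + y`. Since `x, y` are unit vectors, `‖v‖² = 2(1 + r)`,
so the hypothesis says `‖Pv‖² < 4r`. On the other hand, for any vectors `a, b` the parallelogram
law gives `4⟪a, b⟫ = ‖a + b‖² - ‖a - b‖² ≤ ‖a + b‖²`; with `a = Px`, `b = Py` this yields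
`4⟪Px, Py⟫ ≤ ‖Pv‖² < 4r`.
-/

section

variable {F G : Type*} [NormedAddCommGroup F] [InnerProductSpace ℝ F]
  [NormedAddCommGroup G] [InnerProductSpace ℝ G]

theorem real_inner_le_norm_add_sq_div_four (a b : F) : ⟪a, b⟫ ≤ ‖a + b‖ ^ 2 / 4 := by
  rw [norm_add_sq_real]
  linarith [norm_sub_sq_real a b, sq_nonneg ‖a - b‖]

theorem norm_add_sq_eq_of_norm_eq_one {x y : F} (hx : ‖x‖ = 1) (hy : ‖y‖ = 1) :
    ‖x + y‖ ^ 2 = 2 * (1 + ⟪x, y⟫) := by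
  rw [norm_add_sq_real, hx, hy]
  ring

theorem inner_map_lt_of_norm_map_add_sq_lt (T : F →ₗ[ℝ] G) {x y : F}
    (h : ‖T (x + y)‖ ^ 2 < 4 * ⟪x, y⟫) : ⟪T x, T y⟫ < ⟪x, y⟫ :=
  calc ⟪T x, T y⟫ ≤ ‖T x + T y‖ ^ 2 / 4 := real_inner_le_norm_add_sq_div_four _ _
    _ = ‖T (x + y)‖ ^ 2 / 4 := by rw [map_add]
    _ < ⟪x, y⟫ := by linarith

end

/-- Let `x, y` be unit vectors with `r := ⟪x,y⟫ > 0`, `v = x + y`, and `P`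
the orthogonal projection onto a subspace `U`. If `‖Pv‖²/‖v‖² < 2r/(1+r)` then
`⟪x,y⟫ − ⟪Px, Py⟫ > 0`. -/
theorem stmt3 (n : ℕ) (x y : EuclideanSpace ℝ (Fin n))
    (hx : ‖x‖ = 1) (hy : ‖y‖ = 1) (hr : 0 < ⟪x, y⟫)
    (U : Submodule ℝ (EuclideanSpace ℝ (Fin n)))
    (h : ‖(U.orthogonalProjectionOnto (x + y) : EuclideanSpace ℝ (Fin n))‖ ^ 2 / ‖x + y‖ ^ 2 <
        2 * ⟪x, y⟫ / (1 + ⟪x, y⟫)) :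
    0 < ⟪x, y⟫ - ⟪(U.orthogonalProjectionOnto x : EuclideanSpace ℝ (Fin n)),
      (U.orthogonalProjectionOnto y : EuclideanSpace ℝ (Fin n))⟫ := by
  have hv := norm_add_sq_eq_of_norm_eq_one hx hy
  have hr₁ : 0 < 1 + ⟪x, y⟫ := by linarith
  rw [hv, div_lt_div_iff₀ (by positivity) hr₁] at h
  have hPv : ‖(U.orthogonalProjectionOnto (x + y) : EuclideanSpace ℝ (Fin n))‖ ^ 2 < 4 * ⟪x, y⟫ :=
    lt_of_mul_lt_mul_right (by linarith) hr₁.le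
  exact sub_pos.mpr (inner_map_lt_of_norm_map_add_sq_lt
    (U.orthogonalProjectionOnto : _ →L[ℝ] U).toLinearMap hPv)
end

section
/- Let x, y be unit vectors in R^n and let u be a unit vector with P the projection onto span{u}, i.e., Pz = ⟨z,u⟩u. Suppose r := ⟨x,y⟩ > 0. Then the regression coefficient of x in the regression of y onto {x,u} has opposite sign from r if and only if ⟨x,u⟩·⟨y,u⟩ > r. -/
/-!
Least squares makes the residual `y - (b • x + c • u)` orthogonal to `x` and to `u`. These two
normal equations say `b + c ⟪x, u⟫ = ⟪x, y⟫` and `b ⟪x, u⟫ + c = ⟪y, u⟫` for unit `x` and `u`,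
so `b (1 - ⟪x, u⟫²) = ⟪x, y⟫ - ⟪x, u⟫ ⟪y, u⟫`. Linear independence of `x` and `u` is the strict
Cauchy–Schwarz inequality `⟪x, u⟫² < 1`, hence `b` has the sign of `⟪x, y⟫ - ⟪x, u⟫ ⟪y, u⟫`.
-/

open RealInnerProductSpace

variable {F : Type*} [NormedAddCommGroup F] [InnerProductSpace ℝ F]

def IsLeastSquaresFit (y x u : F) (b c : ℝ) : Prop :=
  ∀ b' c' : ℝ, ‖y - (b • x + c • u)‖ ≤ ‖y - (b' • x + c' • u)‖

/-- `t ↦ ‖e + t • v‖²` is a quadratic with vanishing constant term; being bounded below by its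
value at `0`, its discriminant `(2 ⟪e, v⟫)²` is nonpositive. -/
theorem real_inner_eq_zero_of_forall_norm_le_norm_add_smul {e v : F}
    (h : ∀ t : ℝ, ‖e‖ ≤ ‖e + t • v‖) : ⟪e, v⟫ = 0 := by
  have hquad : ∀ t : ℝ, 0 ≤ ‖v‖ ^ 2 * (t * t) + 2 * ⟪e, v⟫ * t + 0 := fun t => by
    have := pow_le_pow_left₀ (norm_nonneg _) (h t) 2
    rw [norm_add_sq_real, real_inner_smul_right, norm_smul, mul_pow, Real.norm_eq_abs,
      sq_abs] at this
    linarith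
  have hdisc := discrim_le_zero hquad
  rw [discrim, mul_zero, sub_zero] at hdisc
  nlinarith [sq_nonneg ⟪e, v⟫]

namespace IsLeastSquaresFit

variable {y x u : F} {b c : ℝ}

theorem inner_residual_left (h : IsLeastSquaresFit y x u b c) :
    ⟪y - (b • x + c • u), x⟫ = 0 :=
  real_inner_eq_zero_of_forall_norm_le_norm_add_smul fun t => by
    convert h (b - t) c using 2
    module

theorem inner_residual_right (h : IsLeastSquaresFit y x u b c) :
    ⟪y - (b • x + c • u), u⟫ = 0 :=
  real_inner_eq_zero_of_forall_norm_le_norm_add_smul fun t => by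
    convert h b (c - t) using 2
    module

/-- Cramer's rule for the normal equations. -/
theorem coeff_mul_gram (h : IsLeastSquaresFit y x u b c) :
    b * (‖x‖ ^ 2 * ‖u‖ ^ 2 - ⟪x, u⟫ ^ 2) = ‖u‖ ^ 2 * ⟪x, y⟫ - ⟪x, u⟫ * ⟪y, u⟫ := by
  have hx := h.inner_residual_left
  have hu := h.inner_residual_right
  simp only [inner_sub_left, inner_add_left, real_inner_smul_left,
    real_inner_self_eq_norm_sq] at hx hu
  rw [real_inner_comm x y, real_inner_comm x u] at hx
  linear_combination (-‖u‖ ^ 2) * hx + ⟪x, u⟫ * hu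

end IsLeastSquaresFit

theorem sq_real_inner_lt_of_linearIndependent {x u : F} (h : LinearIndependent ℝ ![x, u]) :
    ⟪x, u⟫ ^ 2 < ‖x‖ ^ 2 * ‖u‖ ^ 2 := by
  have hx : x ≠ 0 := h.ne_zero 0
  obtain ⟨hu, hnot_mul⟩ := linearIndependent_fin2.1 h
  have hne : |⟪u, x⟫| ≠ ‖u‖ * ‖x‖ := fun heq => by
    obtain ⟨r, -, hr⟩ := (norm_inner_eq_norm_iff (𝕜 := ℝ) hu hx).1 heq
    exact hnot_mul r hr.symm
  have hlt : |⟪x, u⟫| < ‖x‖ * ‖u‖ := by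
    rw [real_inner_comm, mul_comm]
    exact (abs_real_inner_le_norm u x).lt_of_ne hne
  rw [← mul_pow, sq_lt_sq, abs_of_nonneg (by positivity : 0 ≤ ‖x‖ * ‖u‖)]
  exact hlt

theorem stmt7_general (n : ℕ) (x y u : EuclideanSpace ℝ (Fin n))
    (hx : ‖x‖ = 1) (hu : ‖u‖ = 1)
    (hli : LinearIndependent ℝ ![x, u])
    (b c : ℝ)
    (hmin : ∀ b' c' : ℝ, ‖y - (b • x + c • u)‖ ≤ ‖y - (b' • x + c' • u)‖) :
    b < 0 ↔ ⟪x, u⟫ * ⟪y, u⟫ > ⟪x, y⟫ := by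
  have hgram : 0 < 1 - ⟪x, u⟫ ^ 2 := by
    simpa [hx, hu] using sq_real_inner_lt_of_linearIndependent hli
  have hcoeff : b * (1 - ⟪x, u⟫ ^ 2) = ⟪x, y⟫ - ⟪x, u⟫ * ⟪y, u⟫ := by
    simpa [hx, hu] using IsLeastSquaresFit.coeff_mul_gram hmin
  rw [← mul_lt_mul_iff_of_pos_right hgram, zero_mul, hcoeff, sub_neg, gt_iff_lt]

/-- For unit vectors `x, y, u` with `{x, u}` linearly independent and
`r := ⟪x,y⟫ > 0`, the least-squares coefficient of `x` in the regression of `y` onto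
`{x, u}` (without intercept) is negative iff `⟪x,u⟫·⟪y,u⟫ > r`. -/
theorem stmt7 (n : ℕ) (x y u : EuclideanSpace ℝ (Fin n))
    (hx : ‖x‖ = 1) (hy : ‖y‖ = 1) (hu : ‖u‖ = 1)
    (hli : LinearIndependent ℝ ![x, u])
    (hr : 0 < ⟪x, y⟫) (b c : ℝ)
    (hmin : ∀ b' c' : ℝ, ‖y - (b • x + c • u)‖ ≤ ‖y - (b' • x + c' • u)‖) :
    b < 0 ↔ ⟪x, u⟫ * ⟪y, u⟫ > ⟪x, y⟫ :=
  stmt7_general n x y u hx hu hli b c hmin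
end

section
/- Consider data with two groups (x_i ∈ {0,1}) partitioned into k+1 categories. Suppose within every category j, the difference of within-category means ȳ(j,1) − ȳ(j,0) is strictly positive. Then the least-squares coefficient β̂_x of x in the regression of y onto x, an intercept, and category indicator variables is strictly positive. -/
open Finset

/-! At a least-squares minimum the residual `r` is orthogonal to the column span, which contains
`x` and every function of the category. Orthogonality to the category indicators makes the
residuals of the two cells of each category cancel; together with the cell means this gives
`(n₀ + n₁) P_j = n₀ S₁ - n₁ S₀ - n₀ n₁ β_x` for the residual sum `P_j` over the cell `(j, 1)`.
If `β_x ≤ 0`, every `P_j` is positive by the within-category hypothesis, contradicting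
`∑_j P_j = ⟪r, x⟫ = 0`. -/

theorem sum_mul_eq_zero_of_forall_sum_sq_le {ι : Type*} [Fintype ι] {r d : ι → ℝ}
    (h : ∀ t : ℝ, ∑ i, r i ^ 2 ≤ ∑ i, (r i - t * d i) ^ 2) : ∑ i, r i * d i = 0 := by
  have hquad : ∀ t : ℝ,
      0 ≤ (∑ i, d i ^ 2) * (t * t) + (-2 * ∑ i, r i * d i) * t + 0 := fun t => by
    have ht := h t
    rw [sum_congr rfl fun i _ => show (r i - t * d i) ^ 2 =
        r i ^ 2 + -2 * (r i * d i) * t + d i ^ 2 * (t * t) by ring,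
      sum_add_distrib, sum_add_distrib, ← sum_mul, ← sum_mul, ← mul_sum] at ht
    linarith
  have hdiscr := discrim_le_zero hquad
  rw [discrim] at hdiscr
  nlinarith [sq_nonneg (∑ i, r i * d i)]

section LeastSquares

variable {ι : Type*} {k : ℕ}

def categoryEffect (b0 : ℝ) (bc : Fin k → ℝ) (j : Fin (k + 1)) : ℝ :=
  b0 + ∑ i, bc i * if j = i.succ then 1 else 0

def regFit (x : ι → ℝ) (c : ι → Fin (k + 1)) (bx b0 : ℝ) (bc : Fin k → ℝ) (a : ι) : ℝ :=
  bx * x a + categoryEffect b0 bc (c a)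

theorem categoryEffect_eq (g : Fin (k + 1) → ℝ) (j : Fin (k + 1)) :
    categoryEffect (g 0) (fun i => g i.succ - g 0) j = g j := by
  cases j using Fin.cases with
  | zero => simp [categoryEffect, (Fin.succ_ne_zero _).symm]
  | succ i => simp [categoryEffect, Fin.succ_inj]

theorem regFit_add_smul (x : ι → ℝ) (c : ι → Fin (k + 1)) (bx b0 dx d0 t : ℝ)
    (bc dc : Fin k → ℝ) (a : ι) :
    regFit x c (bx + t * dx) (b0 + t * d0) (bc + t • dc) a =
      regFit x c bx b0 bc a + t * regFit x c dx d0 dc a := by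
  simp only [regFit, categoryEffect, Pi.add_apply, Pi.smul_apply, smul_eq_mul, add_mul,
    sum_add_distrib, mul_add, mul_sum]
  ring_nf

variable [Fintype ι]

def rss (y x : ι → ℝ) (c : ι → Fin (k + 1)) (bx b0 : ℝ) (bc : Fin k → ℝ) : ℝ :=
  ∑ a, (y a - regFit x c bx b0 bc a) ^ 2

variable {y x : ι → ℝ} {c : ι → Fin (k + 1)} {bx b0 : ℝ} {bc : Fin k → ℝ}

theorem sum_residual_mul_regFit_eq_zero
    (hmin : ∀ bx' b0' bc', rss y x c bx b0 bc ≤ rss y x c bx' b0' bc')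
    (dx d0 : ℝ) (dc : Fin k → ℝ) :
    ∑ a, (y a - regFit x c bx b0 bc a) * regFit x c dx d0 dc a = 0 :=
  sum_mul_eq_zero_of_forall_sum_sq_le fun t => by
    simpa only [rss, regFit_add_smul, sub_add_eq_sub_sub] using
      hmin (bx + t * dx) (b0 + t * d0) (bc + t • dc)

theorem sum_residual_mul_eq_zero
    (hmin : ∀ bx' b0' bc', rss y x c bx b0 bc ≤ rss y x c bx' b0' bc') :
    ∑ a, (y a - regFit x c bx b0 bc a) * x a = 0 := by
  simpa [regFit, categoryEffect] using sum_residual_mul_regFit_eq_zero hmin 1 0 0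

theorem sum_residual_mul_comp_eq_zero
    (hmin : ∀ bx' b0' bc', rss y x c bx b0 bc ≤ rss y x c bx' b0' bc') (g : Fin (k + 1) → ℝ) :
    ∑ a, (y a - regFit x c bx b0 bc a) * g (c a) = 0 := by
  simpa only [regFit, zero_mul, zero_add, categoryEffect_eq] using
    sum_residual_mul_regFit_eq_zero hmin 0 (g 0) (fun i => g i.succ - g 0)

theorem sum_residual_category_eq_zero
    (hmin : ∀ bx' b0' bc', rss y x c bx b0 bc ≤ rss y x c bx' b0' bc') (j : Fin (k + 1)) :
    ∑ a ∈ univ.filter (fun a => c a = j), (y a - regFit x c bx b0 bc a) = 0 := by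
  simpa only [sum_filter, mul_ite, mul_one, mul_zero] using
    sum_residual_mul_comp_eq_zero hmin fun j' => if j' = j then 1 else 0

end LeastSquares

section Cells

variable {ι : Type*} [Fintype ι] {k : ℕ}

noncomputable def cell (c : ι → Fin (k + 1)) (x : ι → ℝ) (j : Fin (k + 1)) (v : ℝ) : Finset ι :=
  univ.filter (fun a => c a = j ∧ x a = v)

variable {c : ι → Fin (k + 1)} {x : ι → ℝ}

theorem sum_category_eq_sum_cell_add_sum_cell (hx01 : ∀ a, x a = 0 ∨ x a = 1) (f : ι → ℝ) (j : Fin (k + 1)) :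
    ∑ a ∈ univ.filter (fun a => c a = j), f a =
      ∑ a ∈ cell c x j 1, f a + ∑ a ∈ cell c x j 0, f a := by
  rw [← sum_filter_add_sum_filter_not (univ.filter (fun a => c a = j)) (fun a => x a = 1)]
  congr 1 <;> apply sum_congr _ (fun _ _ => rfl) <;> ext a <;>
    rcases hx01 a with h | h <;> simp [cell, h]

theorem sum_mul_eq_sum_cell (hx01 : ∀ a, x a = 0 ∨ x a = 1) (f : ι → ℝ) :
    ∑ a, f a * x a = ∑ j, ∑ a ∈ cell c x j 1, f a := by
  rw [← sum_fiberwise univ c]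
  refine sum_congr rfl fun j _ => ?_
  rw [cell, ← filter_filter, sum_filter (s := univ.filter (fun a => c a = j))]
  refine sum_congr rfl fun a _ => ?_
  rcases hx01 a with h | h <;> simp [h]

theorem sum_cell_residual (y : ι → ℝ) (bx b0 : ℝ) (bc : Fin k → ℝ) (j : Fin (k + 1)) (v : ℝ) :
    ∑ a ∈ cell c x j v, (y a - regFit x c bx b0 bc a) =
      ∑ a ∈ cell c x j v, y a - (cell c x j v).card * (bx * v + categoryEffect b0 bc j) := by
  have hconst : ∀ a ∈ cell c x j v, regFit x c bx b0 bc a = bx * v + categoryEffect b0 bc j :=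
    fun a ha => by
    obtain ⟨-, hc, hx⟩ := mem_filter.1 ha
    rw [regFit, hc, hx]
  rw [sum_sub_distrib, sum_congr rfl hconst, sum_const, nsmul_eq_mul]

end Cells

theorem cell_residual_pos {n0 n1 S0 S1 b γ : ℝ} (hn0 : 0 < n0) (hn1 : 0 < n1)
    (hmean : S0 / n0 < S1 / n1) (hb : b ≤ 0)
    (hcancel : S1 - n1 * (b + γ) + (S0 - n0 * γ) = 0) : 0 < S1 - n1 * (b + γ) := by
  rw [div_lt_div_iff₀ hn0 hn1] at hmean
  nlinarith [mul_pos hn0 hn1]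

/-- Data in two groups (`x a ∈ {0,1}`) partitioned into `k+1` categories.
If every group-by-category cell is nonempty and within every category `j` the difference
of within-category means `ȳ(j,1) − ȳ(j,0)` is strictly positive, then the least-squares
coefficient `bx` of `x` in the regression of `y` onto `x`, an intercept, and category
indicators `u₁,…,u_k` is strictly positive. -/
theorem stmt11 (N k : ℕ) (x y : Fin N → ℝ) (c : Fin N → Fin (k + 1))
    (hx01 : ∀ a, x a = 0 ∨ x a = 1)
    (hne1 : ∀ j : Fin (k + 1), (univ.filter (fun a => c a = j ∧ x a = 1)).Nonempty)
    (hne0 : ∀ j : Fin (k + 1), (univ.filter (fun a => c a = j ∧ x a = 0)).Nonempty)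
    (hpos : ∀ j : Fin (k + 1),
      (∑ a ∈ univ.filter (fun a => c a = j ∧ x a = 1), y a) /
          ((univ.filter (fun a => c a = j ∧ x a = 1)).card : ℝ) >
        (∑ a ∈ univ.filter (fun a => c a = j ∧ x a = 0), y a) /
          ((univ.filter (fun a => c a = j ∧ x a = 0)).card : ℝ))
    (bx b0 : ℝ) (bc : Fin k → ℝ)
    (hmin : ∀ (bx' b0' : ℝ) (bc' : Fin k → ℝ),
      ∑ a, (y a - (bx * x a + b0 + ∑ j, bc j * (if c a = j.succ then 1 else 0))) ^ 2 ≤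
        ∑ a, (y a - (bx' * x a + b0' + ∑ j, bc' j * (if c a = j.succ then 1 else 0))) ^ 2) :
    0 < bx := by
  have hrss : ∀ bx' b0' bc', rss y x c bx b0 bc ≤ rss y x c bx' b0' bc' := by
    simpa only [rss, regFit, categoryEffect, add_assoc] using hmin
  have hcancel (j : Fin (k + 1)) := sum_residual_category_eq_zero hrss j
  have hx := sum_residual_mul_eq_zero hrss
  rw [sum_mul_eq_sum_cell (c := c) hx01] at hx
  by_contra! hbx
  refine (sum_pos (fun j _ => ?_) (univ_nonempty (α := Fin (k + 1)))).ne' hx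
  specialize hcancel j
  rw [sum_category_eq_sum_cell_add_sum_cell hx01, sum_cell_residual, sum_cell_residual] at hcancel
  rw [sum_cell_residual]
  simp only [mul_one, mul_zero, zero_add] at hcancel ⊢
  exact cell_residual_pos (Nat.cast_pos.2 (card_pos.2 (hne0 j)))
    (Nat.cast_pos.2 (card_pos.2 (hne1 j))) (hpos j) hbx hcancel
end

section
/- Let x, y be unit vectors in R^n, let U ⊆ U' be nested subspaces with orthogonal projections P, P'. If ‖P'x‖·‖P'y‖ < |⟨x,y⟩| then ‖Px‖·‖Py‖ < |⟨x,y⟩|; consequently, if the product of the coefficients of determination for the full covariate set is below |r|, then no subset of covariates can induce a reversal. -/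
open RealInnerProductSpace

theorem Submodule.norm_orthogonalProjectionOnto_le_of_le {𝕜 E : Type*} [RCLike 𝕜]
    [NormedAddCommGroup E] [InnerProductSpace 𝕜 E] {U V : Submodule 𝕜 E}
    [U.HasOrthogonalProjection] [V.HasOrthogonalProjection] (hUV : U ≤ V) (z : E) :
    ‖U.orthogonalProjectionOnto z‖ ≤ ‖V.orthogonalProjectionOnto z‖ := by
  rw [← orthogonalProjectionOnto_starProjection_of_le hUV z]
  exact U.norm_orthogonalProjectionOnto_apply_le _

theorem stmt13_general (n : ℕ) (x y : EuclideanSpace ℝ (Fin n))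
    (U U' : Submodule ℝ (EuclideanSpace ℝ (Fin n))) (hUU' : U ≤ U')
    (h : ‖(U'.orthogonalProjectionOnto x : EuclideanSpace ℝ (Fin n))‖ *
        ‖(U'.orthogonalProjectionOnto y : EuclideanSpace ℝ (Fin n))‖ < |⟪x, y⟫|) :
    ‖(U.orthogonalProjectionOnto x : EuclideanSpace ℝ (Fin n))‖ *
      ‖(U.orthogonalProjectionOnto y : EuclideanSpace ℝ (Fin n))‖ < |⟪x, y⟫| :=
  (mul_le_mul (U.norm_orthogonalProjectionOnto_le_of_le hUU' x)
    (U.norm_orthogonalProjectionOnto_le_of_le hUU' y) (norm_nonneg _) (norm_nonneg _)).trans_lt h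

/-- For unit vectors `x, y` and nested subspaces `U ⊆ U'` with orthogonal
projections `P, P'`: if `‖P'x‖·‖P'y‖ < |⟪x,y⟫|` then `‖Px‖·‖Py‖ < |⟪x,y⟫|`.
(Consequently, if the product of coefficients of determination for the full covariate
set is below `|r|`, no subset of covariates can induce a reversal.) -/
theorem stmt13 (n : ℕ) (x y : EuclideanSpace ℝ (Fin n))
    (hx : ‖x‖ = 1) (hy : ‖y‖ = 1)
    (U U' : Submodule ℝ (EuclideanSpace ℝ (Fin n))) (hUU' : U ≤ U')
    (h : ‖(U'.orthogonalProjectionOnto x : EuclideanSpace ℝ (Fin n))‖ *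
        ‖(U'.orthogonalProjectionOnto y : EuclideanSpace ℝ (Fin n))‖ < |⟪x, y⟫|) :
    ‖(U.orthogonalProjectionOnto x : EuclideanSpace ℝ (Fin n))‖ *
      ‖(U.orthogonalProjectionOnto y : EuclideanSpace ℝ (Fin n))‖ < |⟪x, y⟫| :=
  stmt13_general n x y U U' hUU' h
end

section
/- Let x, y, u be unit vectors in R^n with {x, u} linearly independent and ⟨x,y⟩ > 0. Then the least-squares coefficient of x in the regression of y onto {x, u} is negative if and only if the unit vector u (or −u) lies in the open cone C = {w ≠ 0 : ⟨x,w⟩⟨y,w⟩ > ⟨x,y⟩·‖w‖²}; moreover C is symmetric under w ↦ −w and is invariant under positive scaling. -/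
/-!
The coefficients `b, c` of the least-squares fit of `y` by `b • x + c • u` satisfy the normal
equations, and solving them by Cramer's rule gives
`b * (‖x‖² ‖u‖² - ⟪x, u⟫²) = ‖u‖² ⟪x, y⟫ - ⟪x, u⟫ ⟪y, u⟫`.
Linear independence makes the Gram determinant positive (strict Cauchy–Schwarz), so `b < 0`
exactly when `⟪x, u⟫ ⟪y, u⟫ > ⟪x, y⟫ ‖u‖²`, i.e. when `u` lies in the reversal cone. Both sides of
that inequality are quadratic forms in `u`, whence the cone is invariant under nonzero scalings.
-/

open RealInnerProductSpace

variable {F : Type*} [NormedAddCommGroup F] [InnerProductSpace ℝ F]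

theorem real_inner_eq_zero_of_forall_norm_le_norm_sub_smul {r v : F}
    (h : ∀ t : ℝ, ‖r‖ ≤ ‖r - t • v‖) : ⟪r, v⟫ = 0 := by
  have quadratic_nonneg : ∀ t : ℝ, 0 ≤ t ^ 2 * ‖v‖ ^ 2 - 2 * t * ⟪r, v⟫ := fun t => by
    have hsq := pow_le_pow_left₀ (norm_nonneg r) (h t) 2
    rw [norm_sub_sq_real, real_inner_smul_right, norm_smul, Real.norm_eq_abs, mul_pow,
      sq_abs] at hsq
    linarith
  have hN : 0 < ‖v‖ ^ 2 + 1 := by positivity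
  have hneg := quadratic_nonneg (⟪r, v⟫ / (‖v‖ ^ 2 + 1))
  field_simp at hneg
  nlinarith [sq_nonneg ⟪r, v⟫]

theorem real_inner_sq_lt_norm_sq_mul_norm_sq {x u : F} (hli : LinearIndependent ℝ ![x, u]) :
    ⟪x, u⟫ ^ 2 < ‖x‖ ^ 2 * ‖u‖ ^ 2 := by
  have hx : x ≠ 0 := by simpa using hli.ne_zero 0
  have hu : u ≠ 0 := by simpa using hli.ne_zero 1
  have hne : |⟪x, u⟫| ≠ ‖x‖ * ‖u‖ := by
    intro heq
    obtain ⟨s, -, rfl⟩ := (norm_inner_eq_norm_iff (𝕜 := ℝ) hx hu).mp heq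
    simpa using LinearIndependent.pair_iff.mp hli s (-1) (by simp)
  rw [← mul_pow, ← sq_abs]
  exact pow_lt_pow_left₀ ((abs_real_inner_le_norm x u).lt_of_ne hne) (abs_nonneg _) two_ne_zero

def reversalCone (x y : F) : Set F :=
  {w | w ≠ 0 ∧ ⟪x, w⟫ * ⟪y, w⟫ > ⟪x, y⟫ * ‖w‖ ^ 2}

theorem smul_mem_reversalCone_iff {x y w : F} {t : ℝ} (ht : t ≠ 0) :
    t • w ∈ reversalCone x y ↔ w ∈ reversalCone x y := by
  have ht2 : 0 < t ^ 2 := by positivity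
  simp only [reversalCone, Set.mem_ofPred_eq, smul_ne_zero_iff_right ht, real_inner_smul_right,
    norm_smul, Real.norm_eq_abs, mul_pow, sq_abs, gt_iff_lt]
  rw [show t * ⟪x, w⟫ * (t * ⟪y, w⟫) = t ^ 2 * (⟪x, w⟫ * ⟪y, w⟫) by ring,
    mul_left_comm, mul_lt_mul_iff_right₀ ht2]

theorem neg_mem_reversalCone_iff {x y w : F} : -w ∈ reversalCone x y ↔ w ∈ reversalCone x y := by
  simpa using smul_mem_reversalCone_iff (x := x) (y := y) (w := w) (neg_ne_zero.mpr one_ne_zero)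

section LeastSquares

variable {x u y : F} {b c : ℝ}

theorem real_inner_residual_eq_zero_of_isLeastSquares
    (hmin : ∀ b' c' : ℝ, ‖y - (b • x + c • u)‖ ≤ ‖y - (b' • x + c' • u)‖) :
    ⟪y - (b • x + c • u), x⟫ = 0 ∧ ⟪y - (b • x + c • u), u⟫ = 0 := by
  constructor <;> apply real_inner_eq_zero_of_forall_norm_le_norm_sub_smul <;> intro t
  · convert hmin (b + t) c using 2
    module
  · convert hmin b (c + t) using 2
    module

theorem leastSquares_coeff_mul_gram
    (hmin : ∀ b' c' : ℝ, ‖y - (b • x + c • u)‖ ≤ ‖y - (b' • x + c' • u)‖) :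
    b * (‖x‖ ^ 2 * ‖u‖ ^ 2 - ⟪x, u⟫ ^ 2) = ‖u‖ ^ 2 * ⟪x, y⟫ - ⟪x, u⟫ * ⟪y, u⟫ := by
  obtain ⟨hx, hu⟩ := real_inner_residual_eq_zero_of_isLeastSquares hmin
  simp only [inner_sub_left, inner_add_left, real_inner_smul_left, real_inner_self_eq_norm_sq]
    at hx hu
  rw [real_inner_comm x y, real_inner_comm x u] at hx
  linear_combination ⟪x, u⟫ * hu - ‖u‖ ^ 2 * hx

theorem leastSquares_coeff_neg_iff_mem_reversalCone (hli : LinearIndependent ℝ ![x, u])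
    (hmin : ∀ b' c' : ℝ, ‖y - (b • x + c • u)‖ ≤ ‖y - (b' • x + c' • u)‖) :
    b < 0 ↔ u ∈ reversalCone x y := by
  have hgram := sub_pos.mpr (real_inner_sq_lt_norm_sq_mul_norm_sq hli)
  have hu : u ≠ 0 := by simpa using hli.ne_zero 1
  calc b < 0 ↔ b * (‖x‖ ^ 2 * ‖u‖ ^ 2 - ⟪x, u⟫ ^ 2) < 0 :=
        ⟨fun h => mul_neg_of_neg_of_pos h hgram, fun h => neg_of_mul_neg_left h hgram.le⟩
    _ ↔ u ∈ reversalCone x y := by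
        rw [leastSquares_coeff_mul_gram hmin, sub_neg, mul_comm (‖u‖ ^ 2)]
        exact ⟨fun h => ⟨hu, h⟩, And.right⟩

end LeastSquares

theorem stmt17_general (n : ℕ) (x y u : EuclideanSpace ℝ (Fin n))
    (hli : LinearIndependent ℝ ![x, u])
    (b c : ℝ)
    (hmin : ∀ b' c' : ℝ, ‖y - (b • x + c • u)‖ ≤ ‖y - (b' • x + c' • u)‖) :
    (b < 0 ↔ u ∈ {w : EuclideanSpace ℝ (Fin n) |
        w ≠ 0 ∧ ⟪x, w⟫ * ⟪y, w⟫ > ⟪x, y⟫ * ‖w‖ ^ 2}) ∧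
    (∀ w : EuclideanSpace ℝ (Fin n),
      w ∈ {w : EuclideanSpace ℝ (Fin n) |
          w ≠ 0 ∧ ⟪x, w⟫ * ⟪y, w⟫ > ⟪x, y⟫ * ‖w‖ ^ 2} ↔
        -w ∈ {w : EuclideanSpace ℝ (Fin n) |
          w ≠ 0 ∧ ⟪x, w⟫ * ⟪y, w⟫ > ⟪x, y⟫ * ‖w‖ ^ 2}) ∧
    (∀ (t : ℝ), 0 < t → ∀ w : EuclideanSpace ℝ (Fin n),
      w ∈ {w : EuclideanSpace ℝ (Fin n) |
          w ≠ 0 ∧ ⟪x, w⟫ * ⟪y, w⟫ > ⟪x, y⟫ * ‖w‖ ^ 2} →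
        t • w ∈ {w : EuclideanSpace ℝ (Fin n) |
          w ≠ 0 ∧ ⟪x, w⟫ * ⟪y, w⟫ > ⟪x, y⟫ * ‖w‖ ^ 2}) :=
  ⟨leastSquares_coeff_neg_iff_mem_reversalCone hli hmin,
    fun _ => neg_mem_reversalCone_iff.symm,
    fun _ ht _ => (smul_mem_reversalCone_iff ht.ne').mpr⟩

/-- For unit vectors `x, y, u` with `{x, u}` linearly independent and
`⟪x,y⟫ > 0`, the least-squares coefficient of `x` in the regression of `y` onto
`{x, u}` is negative iff `u` lies in the open reversal cone
`C = {w ≠ 0 : ⟪x,w⟫⟪y,w⟫ > ⟪x,y⟫‖w‖²}`; moreover `C` is symmetric under `w ↦ −w`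
and invariant under positive scaling. -/
theorem stmt17 (n : ℕ) (x y u : EuclideanSpace ℝ (Fin n))
    (hx : ‖x‖ = 1) (hy : ‖y‖ = 1) (hu : ‖u‖ = 1)
    (hli : LinearIndependent ℝ ![x, u]) (hr : 0 < ⟪x, y⟫)
    (b c : ℝ)
    (hmin : ∀ b' c' : ℝ, ‖y - (b • x + c • u)‖ ≤ ‖y - (b' • x + c' • u)‖) :
    (b < 0 ↔ u ∈ {w : EuclideanSpace ℝ (Fin n) |
        w ≠ 0 ∧ ⟪x, w⟫ * ⟪y, w⟫ > ⟪x, y⟫ * ‖w‖ ^ 2}) ∧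
    (∀ w : EuclideanSpace ℝ (Fin n),
      w ∈ {w : EuclideanSpace ℝ (Fin n) |
          w ≠ 0 ∧ ⟪x, w⟫ * ⟪y, w⟫ > ⟪x, y⟫ * ‖w‖ ^ 2} ↔
        -w ∈ {w : EuclideanSpace ℝ (Fin n) |
          w ≠ 0 ∧ ⟪x, w⟫ * ⟪y, w⟫ > ⟪x, y⟫ * ‖w‖ ^ 2}) ∧
    (∀ (t : ℝ), 0 < t → ∀ w : EuclideanSpace ℝ (Fin n),
      w ∈ {w : EuclideanSpace ℝ (Fin n) |
          w ≠ 0 ∧ ⟪x, w⟫ * ⟪y, w⟫ > ⟪x, y⟫ * ‖w‖ ^ 2} →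
        t • w ∈ {w : EuclideanSpace ℝ (Fin n) |
          w ≠ 0 ∧ ⟪x, w⟫ * ⟪y, w⟫ > ⟪x, y⟫ * ‖w‖ ^ 2}) :=
  stmt17_general n x y u hli b c hmin
end
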